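/- arXiv:2505.17291 — 7 statements merged into one kernel-verified Lean document; each statement's English description precedes it below -/
import Mathlib

section
/- Let X be a random vector in ℝ^d with E‖X‖² < ∞, and let ω be an MCAR mask with probability vector p ∈ (0,1]^d, independent of X. Then the second-moment matrix of the zero-imputed vector X^NA := X ⊙ ω satisfies E[X^NA (X^NA)ᵀ] = P · E[XXᵀ] · P + P(I_d − P) · diag(E[XXᵀ]). -/
open MeasureTheory ProbabilityTheory

/-- The second-moment matrix `E[X Xᵀ]` of a random vector, defined entrywise. -/
noncomputable def secondMoment {Ω : Type*} [MeasurableSpace Ω] (μ : Measure Ω) {d : ℕ}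
    (X : Ω → Fin d → ℝ) : Matrix (Fin d) (Fin d) ℝ :=
  Matrix.of fun i j => ∫ a, X a i * X a j ∂μ

/-!
Independence of `X` and `W` factors each entry of the masked second moment:
`E[(X_i W_i)(X_j W_j)] = E[X_i X_j] E[W_i W_j]`, i.e. `E[(X⊙W)(X⊙W)ᵀ] = E[XXᵀ] ⊙ E[WWᵀ]`.
Off the diagonal the coordinates of the mask are independent, so `E[W_i W_j] = p_i p_j`; on the
diagonal `W_i² = W_i`, so `E[W_i²] = p_i = p_i² + p_i (1 - p_i)`. Hence
`E[WWᵀ] = p pᵀ + diag(p (1 - p))`, and Hadamard multiplication by `p pᵀ` is `M ↦ P M P`.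
-/

namespace Matrix

variable {n : Type*} [Fintype n] [DecidableEq n]

theorem hadamard_vecMulVec {R : Type*} [CommSemiring R] (M : Matrix n n R) (u v : n → R) :
    M ⊙ vecMulVec u v = diagonal u * M * diagonal v := by
  ext i j
  simp only [hadamard_apply, vecMulVec_apply, mul_diagonal, diagonal_mul]
  ring

theorem hadamard_vecMulVec_add_diagonal {R : Type*} [CommRing R] (M : Matrix n n R)
    (p : n → R) :
    M ⊙ (vecMulVec p p + diagonal fun i => p i * (1 - p i)) =
      diagonal p * M * diagonal p + diagonal p * (1 - diagonal p) * diagonal M.diag := by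
  rw [hadamard_add, hadamard_vecMulVec, hadamard_diagonal, ← diagonal_one, diagonal_sub,
    diagonal_mul_diagonal, diagonal_mul_diagonal]
  congr 2
  ext i
  simp only [Pi.mul_apply, diag_apply]
  ring

end Matrix

open Matrix

section

variable {Ω : Type*} [MeasurableSpace Ω] {μ : Measure Ω}

theorem integral_eq_measureReal_of_ae_eq_zero_or_one {f : Ω → ℝ} (hf : Measurable f)
    (h01 : ∀ᵐ a ∂μ, f a = 0 ∨ f a = 1) :
    ∫ a, f a ∂μ = μ.real {a | f a = 1} := by
  have hf_eq : f =ᵐ[μ] {a | f a = 1}.indicator 1 := by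
    filter_upwards [h01] with a ha
    rcases ha with h | h <;> simp [h]
  rw [integral_congr_ae hf_eq]
  exact integral_indicator_one (hf (measurableSet_singleton 1))

variable {d : ℕ}

theorem secondMoment_hadamard_eq_hadamard {X W : Ω → Fin d → ℝ}
    (hX : ∀ i, AEStronglyMeasurable (fun a => X a i) μ)
    (hW : ∀ i, AEStronglyMeasurable (fun a => W a i) μ) (hXW : IndepFun X W μ) :
    secondMoment μ (fun a i => X a i * W a i) = secondMoment μ X ⊙ secondMoment μ W := by
  ext i j
  have hprod : Measurable fun v : Fin d → ℝ => v i * v j :=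
    (measurable_pi_apply i).mul (measurable_pi_apply j)
  have hindep : IndepFun (fun a => X a i * X a j) (fun a => W a i * W a j) μ :=
    hXW.comp hprod hprod
  calc ∫ a, X a i * W a i * (X a j * W a j) ∂μ
      = ∫ a, X a i * X a j * (W a i * W a j) ∂μ := by congr 1; ext a; ring
    _ = (∫ a, X a i * X a j ∂μ) * ∫ a, W a i * W a j ∂μ :=
      hindep.integral_fun_mul_eq_mul_integral ((hX i).mul (hX j)) ((hW i).mul (hW j))

theorem secondMoment_of_ae_eq_zero_or_one {W : Ω → Fin d → ℝ}
    (hW : ∀ i, AEStronglyMeasurable (fun a => W a i) μ)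
    (h01 : ∀ᵐ a ∂μ, ∀ i, W a i = 0 ∨ W a i = 1)
    (hindep : Pairwise fun i j => IndepFun (fun a => W a i) (fun a => W a j) μ)
    {m : Fin d → ℝ} (hm : ∀ i, ∫ a, W a i ∂μ = m i) :
    secondMoment μ W = vecMulVec m m + diagonal fun i => m i * (1 - m i) := by
  ext i j
  simp only [secondMoment, of_apply, Matrix.add_apply, vecMulVec_apply, diagonal_apply]
  rcases eq_or_ne i j with rfl | hij
  · have hsq : (fun a => W a i * W a i) =ᵐ[μ] fun a => W a i := by
      filter_upwards [h01] with a ha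
      rcases ha i with h | h <;> simp [h]
    rw [integral_congr_ae hsq, hm, if_pos rfl]
    ring
  · rw [(hindep hij).integral_fun_mul_eq_mul_integral (hW i) (hW j), hm, hm, if_neg hij,
      add_zero]

end

theorem secondMoment_hadamard_mcar_mask_general
    {Ω : Type*} [MeasurableSpace Ω] (μ : Measure Ω)
    {d : ℕ} (X W : Ω → Fin d → ℝ) (p : Fin d → ℝ)
    (hp : ∀ i, p i ∈ Set.Ioc (0 : ℝ) 1)
    (hXmeas : Measurable X) (hWmeas : Measurable W)
    (hW01 : ∀ᵐ a ∂μ, ∀ i, W a i = 0 ∨ W a i = 1)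
    (hWber : ∀ i, μ {a | W a i = 1} = ENNReal.ofReal (p i))
    (hWiIndep : iIndepFun (fun i a => W a i) μ)
    (hIndep : IndepFun W X μ) :
    secondMoment μ (fun a i => X a i * W a i) =
      Matrix.diagonal p * secondMoment μ X * Matrix.diagonal p
        + Matrix.diagonal p * (1 - Matrix.diagonal p)
            * Matrix.diagonal (fun i => secondMoment μ X i i) := by
  have hXi i : AEStronglyMeasurable (fun a => X a i) μ :=
    ((measurable_pi_apply i).comp hXmeas).aestronglyMeasurable
  have hWi i : Measurable fun a => W a i := (measurable_pi_apply i).comp hWmeas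
  have hmean i : ∫ a, W a i ∂μ = p i := by
    rw [integral_eq_measureReal_of_ae_eq_zero_or_one (hWi i) (hW01.mono fun a ha => ha i),
      measureReal_def, hWber i, ENNReal.toReal_ofReal (hp i).1.le]
  rw [secondMoment_hadamard_eq_hadamard hXi (fun i => (hWi i).aestronglyMeasurable) hIndep.symm,
    secondMoment_of_ae_eq_zero_or_one (fun i => (hWi i).aestronglyMeasurable) hW01
      (fun i j hij => hWiIndep.indepFun hij) hmean]
  exact hadamard_vecMulVec_add_diagonal _ p

/-- **Second moment of a zero-imputed MCAR-masked vector.**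
If `X` is a random vector in `ℝ^d` with `E‖X‖² < ∞` and `W` is an MCAR mask with probability
vector `p ∈ (0,1]^d` (coordinates independent, `{0,1}`-valued, `P(W_i = 1) = p_i`),
independent of `X`, then the zero-imputed vector `X ⊙ W` satisfies
`E[(X⊙W)(X⊙W)ᵀ] = P E[XXᵀ] P + P (I - P) diag(E[XXᵀ])` where `P = diag(p)`. -/
theorem secondMoment_hadamard_mcar_mask
    {Ω : Type*} [MeasurableSpace Ω] (μ : Measure Ω) [IsProbabilityMeasure μ]
    {d : ℕ} (X W : Ω → Fin d → ℝ) (p : Fin d → ℝ)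
    (hp : ∀ i, p i ∈ Set.Ioc (0 : ℝ) 1)
    (hXmeas : Measurable X) (hWmeas : Measurable W)
    (hX2 : Integrable (fun a => ∑ i, (X a i) ^ 2) μ)
    (hW01 : ∀ᵐ a ∂μ, ∀ i, W a i = 0 ∨ W a i = 1)
    (hWber : ∀ i, μ {a | W a i = 1} = ENNReal.ofReal (p i))
    (hWiIndep : iIndepFun (fun i a => W a i) μ)
    (hIndep : IndepFun W X μ) :
    secondMoment μ (fun a i => X a i * W a i) =
      Matrix.diagonal p * secondMoment μ X * Matrix.diagonal p
        + Matrix.diagonal p * (1 - Matrix.diagonal p)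
            * Matrix.diagonal (fun i => secondMoment μ X i i) :=
  secondMoment_hadamard_mcar_mask_general μ X W p hp hXmeas hWmeas hW01 hWber hWiIndep hIndep
end

section
/- Let X be a random vector in ℝ^d with E‖X‖² < ∞, mean m_x := E[X] and covariance matrix Σ_x := Cov(X), and let ω be an MCAR mask with probability vector p ∈ (0,1]^d, independent of X. Then the zero-imputed vector X^NA := X ⊙ ω satisfies E[X^NA] = P m_x and Cov(X^NA) = P Σ_x P + P(I_d − P) diag(Σ_x) + P(I_d − P) diag(m_x) diag(m_x). -/
open MeasureTheory ProbabilityTheory Matrix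

/-- The mean vector of a random vector, defined coordinatewise. -/
noncomputable def meanVec {Ω : Type*} [MeasurableSpace Ω] (μ : Measure Ω) {d : ℕ}
    (X : Ω → Fin d → ℝ) : Fin d → ℝ :=
  fun i => ∫ a, X a i ∂μ

/-- The covariance matrix `E[(X - EX)(X - EX)ᵀ]` of a random vector, defined entrywise. -/
noncomputable def covMatrix {Ω : Type*} [MeasurableSpace Ω] (μ : Measure Ω) {d : ℕ}
    (X : Ω → Fin d → ℝ) : Matrix (Fin d) (Fin d) ℝ :=
  Matrix.of fun i j => ∫ a, (X a i - meanVec μ X i) * (X a j - meanVec μ X j) ∂μ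

/-!
Coordinatewise, `X_i ω_i` has mean `p_i m_i` by independence of `X` and `ω`, and likewise
`E[(X_i ω_i)(X_j ω_j)] = E[X_i X_j] E[ω_i ω_j]`. The mask moments are `E[ω_i ω_j] = p_i p_j`
for `i ≠ j` (independent coordinates) and `E[ω_i²] = E[ω_i] = p_i` (since `ω_i² = ω_i`), so
subtracting the product of the means leaves `p_i p_j Σ_ij` plus, on the diagonal only, the extra
term `p_i (1 - p_i) (Σ_ii + m_i²)`.
-/

section

variable {Ω : Type*} [MeasurableSpace Ω] {μ : Measure Ω}

lemma covMatrix_apply_eq_covariance {d : ℕ} (X : Ω → Fin d → ℝ) (i j : Fin d) :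
    covMatrix μ X i j = cov[fun a => X a i, fun a => X a j; μ] := rfl

lemma covMatrix_apply_eq_sub [IsProbabilityMeasure μ] {d : ℕ} {X : Ω → Fin d → ℝ}
    (hX : ∀ i, MemLp (fun a => X a i) 2 μ) (i j : Fin d) :
    covMatrix μ X i j = ∫ a, X a i * X a j ∂μ - meanVec μ X i * meanVec μ X j :=
  (covMatrix_apply_eq_covariance X i j).trans (covariance_eq_sub (hX i) (hX j))

lemma memLp_two_apply_of_integrable_sum_sq {ι : Type*} [Fintype ι] {X : Ω → ι → ℝ}
    (hX : ∀ i, AEStronglyMeasurable (fun a => X a i) μ)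
    (hX2 : Integrable (fun a => ∑ i, X a i ^ 2) μ) (i : ι) :
    MemLp (fun a => X a i) 2 μ :=
  (memLp_two_iff_integrable_sq (hX i)).2 <| hX2.mono' ((hX i).pow 2) <| ae_of_all _ fun a => by
    rw [Real.norm_eq_abs, abs_of_nonneg (sq_nonneg _)]
    exact Finset.single_le_sum (fun k _ => sq_nonneg (X a k)) (Finset.mem_univ i)

section ZeroOne

variable {f : Ω → ℝ}

lemma MeasureTheory.MemLp.mul_of_ae_zero_or_one {g : Ω → ℝ} {q : ENNReal} (hg : MemLp g q μ)
    (hf : AEStronglyMeasurable f μ) (hf01 : ∀ᵐ a ∂μ, f a = 0 ∨ f a = 1) :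
    MemLp (fun a => g a * f a) q μ :=
  hg.of_le (hg.aestronglyMeasurable.mul hf) <| hf01.mono fun a ha => by
    rcases ha with h | h <;> simp [h]

lemma integral_eq_of_ae_zero_or_one {p : ℝ} (hp : 0 ≤ p) (hf : Measurable f)
    (hf01 : ∀ᵐ a ∂μ, f a = 0 ∨ f a = 1) (hfp : μ {a | f a = 1} = ENNReal.ofReal p) :
    ∫ a, f a ∂μ = p := by
  have hf_eq : f =ᵐ[μ] Set.indicator (f ⁻¹' {1}) 1 := hf01.mono fun a ha => by
    rcases ha with h | h <;> simp [Set.indicator, h]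
  rw [integral_congr_ae hf_eq, integral_indicator_one (hf (measurableSet_singleton 1)),
    measureReal_def]
  exact (congrArg ENNReal.toReal hfp).trans (ENNReal.toReal_ofReal hp)

end ZeroOne

lemma integral_mul_of_mcar_mask {ι : Type*} [DecidableEq ι] {W : Ω → ι → ℝ} {p : ι → ℝ}
    (hp : ∀ i, 0 ≤ p i) (hW : Measurable W) (hW01 : ∀ᵐ a ∂μ, ∀ i, W a i = 0 ∨ W a i = 1)
    (hWber : ∀ i, μ {a | W a i = 1} = ENNReal.ofReal (p i))
    (hWindep : iIndepFun (fun i a => W a i) μ) (i j : ι) :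
    ∫ a, W a i * W a j ∂μ = if i = j then p i else p i * p j := by
  have hmean : ∀ k, ∫ a, W a k ∂μ = p k := fun k =>
    integral_eq_of_ae_zero_or_one (hp k) hW.eval (hW01.mono fun a ha => ha k) (hWber k)
  split_ifs with hij
  · subst hij
    have hidem : (fun a => W a i * W a i) =ᵐ[μ] fun a => W a i := hW01.mono fun a ha => by
      rcases ha i with h | h <;> simp [h]
    rw [integral_congr_ae hidem, hmean]
  · rw [← hmean i, ← hmean j]
    exact (hWindep.indepFun hij).integral_mul_eq_mul_integral
      hW.eval.aestronglyMeasurable hW.eval.aestronglyMeasurable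

end

lemma diagonal_covariance_formula_apply {n : Type*} [Fintype n] [DecidableEq n]
    (p m : n → ℝ) (S : Matrix n n ℝ) (i j : n) :
    (diagonal p * S * diagonal p + diagonal p * (1 - diagonal p) * diagonal (fun k => S k k)
        + diagonal p * (1 - diagonal p) * (diagonal m * diagonal m)) i j
      = p i * p j * S i j + if i = j then p i * (1 - p i) * (S i i + m i ^ 2) else 0 := by
  simp only [Matrix.add_apply, Matrix.sub_apply, mul_diagonal, diagonal_mul, diagonal_mul_diagonal,
    diagonal_apply, one_apply]
  split_ifs with h
  · subst h; ring
  · ring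

/-- **Mean and covariance of a zero-imputed MCAR-masked vector.**
If `X` is a random vector in `ℝ^d` with `E‖X‖² < ∞`, mean `m_x` and covariance `Σ_x`, and `W`
is an MCAR mask with probability vector `p ∈ (0,1]^d`, independent of `X`, then the zero-imputed
vector `X ⊙ W` satisfies `E[X⊙W] = P m_x` and
`Cov(X⊙W) = P Σ_x P + P(I - P) diag(Σ_x) + P(I - P) diag(m_x) diag(m_x)`. -/
theorem mean_cov_hadamard_mcar_mask
    {Ω : Type*} [MeasurableSpace Ω] (μ : Measure Ω) [IsProbabilityMeasure μ]
    {d : ℕ} (X W : Ω → Fin d → ℝ) (p : Fin d → ℝ)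
    (hp : ∀ i, p i ∈ Set.Ioc (0 : ℝ) 1)
    (hXmeas : Measurable X) (hWmeas : Measurable W)
    (hX2 : Integrable (fun a => ∑ i, (X a i) ^ 2) μ)
    (hW01 : ∀ᵐ a ∂μ, ∀ i, W a i = 0 ∨ W a i = 1)
    (hWber : ∀ i, μ {a | W a i = 1} = ENNReal.ofReal (p i))
    (hWiIndep : iIndepFun (fun i a => W a i) μ)
    (hIndep : IndepFun W X μ) :
    meanVec μ (fun a i => X a i * W a i) = Matrix.diagonal p *ᵥ meanVec μ X ∧
    covMatrix μ (fun a i => X a i * W a i) =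
      Matrix.diagonal p * covMatrix μ X * Matrix.diagonal p
        + Matrix.diagonal p * (1 - Matrix.diagonal p)
            * Matrix.diagonal (fun i => covMatrix μ X i i)
        + Matrix.diagonal p * (1 - Matrix.diagonal p)
            * (Matrix.diagonal (meanVec μ X) * Matrix.diagonal (meanVec μ X)) := by
  have hX : ∀ i, MemLp (fun a => X a i) 2 μ :=
    memLp_two_apply_of_integrable_sum_sq (fun i => hXmeas.eval.aestronglyMeasurable) hX2
  have hXW : ∀ i, MemLp (fun a => X a i * W a i) 2 μ := fun i =>
    (hX i).mul_of_ae_zero_or_one hWmeas.eval.aestronglyMeasurable (hW01.mono fun a ha => ha i)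
  have hWW := integral_mul_of_mcar_mask (fun i => (hp i).1.le) hWmeas hW01 hWber hWiIndep
  have hfactor : ∀ φ ψ : (Fin d → ℝ) → ℝ, Measurable φ → Measurable ψ →
      ∫ a, φ (X a) * ψ (W a) ∂μ = (∫ a, φ (X a) ∂μ) * ∫ a, ψ (W a) ∂μ := fun φ ψ hφ hψ =>
    hIndep.symm.integral_fun_comp_mul_comp hXmeas.aemeasurable hWmeas.aemeasurable
      hφ.aestronglyMeasurable hψ.aestronglyMeasurable
  have hmean : ∀ i, meanVec μ (fun a i => X a i * W a i) i = p i * meanVec μ X i := fun i => by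
    rw [meanVec, hfactor (fun x => x i) (fun w => w i) (measurable_pi_apply i)
      (measurable_pi_apply i), integral_eq_of_ae_zero_or_one (hp i).1.le hWmeas.eval
      (hW01.mono fun a ha => ha i) (hWber i), mul_comm, meanVec]
  refine ⟨funext fun i => by rw [hmean, mulVec_diagonal], ?_⟩
  ext i j
  have hsecond : ∫ a, X a i * W a i * (X a j * W a j) ∂μ
      = (∫ a, X a i * X a j ∂μ) * ∫ a, W a i * W a j ∂μ := by
    rw [← hfactor (fun x => x i * x j) (fun w => w i * w j) (by fun_prop) (by fun_prop)]
    congr 1 with a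
    ring
  rw [covMatrix_apply_eq_sub hXW, hmean, hmean, hsecond, hWW,
    diagonal_covariance_formula_apply, covMatrix_apply_eq_sub hX, covMatrix_apply_eq_sub hX]
  split_ifs with h
  · subst h; ring
  · ring
end

section
/- Let X₁, …, Xₙ be i.i.d. copies of a centered (E[X] = 0) random vector X in ℝ^d with E‖X‖² < ∞ and covariance Σ, and let ω₁, …, ωₙ be i.i.d. MCAR masks with probability vector p ∈ (0,1]^d, independent of (X₁, …, Xₙ). Set Z_i := X_i ⊙ ω_i and S := n⁻¹ Σ_{i=1}^n Z_i Z_iᵀ. Then the debiased covariance estimator Σ̂ := P⁻¹(I_d − P⁻¹) diag(S) + P⁻¹ S P⁻¹ is unbiased: E[Σ̂] = Σ. -/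
/-! Since `ωₖ² = ωₖ` and distinct mask coordinates are independent, `M := E[ωωᵀ]` has entries
`pₖ` on the diagonal and `pₖ pₗ` off it; as the mask is independent of the sample, `E[S] = M ⊙ Σ`.
The estimator is linear in `S` and inverts `A ↦ M ⊙ A`: off the diagonal it divides by `pₖ pₗ`,
and on it `pₖ⁻¹ (1 - pₖ⁻¹) pₖ + pₖ⁻¹ pₖ pₖ⁻¹ = 1`. -/

open MeasureTheory ProbabilityTheory Matrix

/-- The empirical second-moment matrix `n⁻¹ ∑ᵢ Zᵢ Zᵢᵀ` of sample vectors `Z₁, …, Zₙ`. -/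
noncomputable def empSecondMoment {n d : ℕ} (Z : Fin n → Fin d → ℝ) :
    Matrix (Fin d) (Fin d) ℝ :=
  Matrix.of fun k l => (n : ℝ)⁻¹ * ∑ i, Z i k * Z i l

/-- The debiased covariance estimator
`P⁻¹(I - P⁻¹) diag(S) + P⁻¹ S P⁻¹` built from a matrix `S` and probabilities `p`. -/
noncomputable def debiasedCov {d : ℕ} (p : Fin d → ℝ) (S : Matrix (Fin d) (Fin d) ℝ) :
    Matrix (Fin d) (Fin d) ℝ :=
  Matrix.diagonal (fun i => (p i)⁻¹) * (1 - Matrix.diagonal (fun i => (p i)⁻¹))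
      * Matrix.diagonal (fun i => S i i)
    + Matrix.diagonal (fun i => (p i)⁻¹) * S * Matrix.diagonal (fun i => (p i)⁻¹)

lemma debiasedCov_apply {d : ℕ} (p : Fin d → ℝ) (S : Matrix (Fin d) (Fin d) ℝ) (k l : Fin d) :
    debiasedCov p S k l
      = (if k = l then (p k)⁻¹ * (1 - (p k)⁻¹) * S k k else 0) + (p k)⁻¹ * S k l * (p l)⁻¹ := by
  have h_one_sub : (1 : Matrix (Fin d) (Fin d) ℝ) - diagonal (fun i => (p i)⁻¹)
      = diagonal (fun i => 1 - (p i)⁻¹) := by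
    rw [← diagonal_one, diagonal_sub]
  rw [debiasedCov, Matrix.add_apply, h_one_sub, diagonal_mul_diagonal, diagonal_mul_diagonal,
    mul_diagonal, diagonal_mul, diagonal_apply]

def maskSecondMoment {d : ℕ} (p : Fin d → ℝ) : Matrix (Fin d) (Fin d) ℝ :=
  Matrix.of fun k l => if k = l then p k else p k * p l

lemma debiasedCov_maskSecondMoment_hadamard {d : ℕ} {p : Fin d → ℝ} (hp : ∀ k, p k ≠ 0)
    (A : Matrix (Fin d) (Fin d) ℝ) :
    debiasedCov p (maskSecondMoment p ⊙ A) = A := by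
  ext k l
  rcases eq_or_ne k l with rfl | hkl
  · simp only [debiasedCov_apply, hadamard_apply, maskSecondMoment, of_apply, if_true]
    field_simp [hp k]
    ring
  · simp only [debiasedCov_apply, hadamard_apply, maskSecondMoment, of_apply, if_neg hkl, zero_add]
    field_simp [hp k, hp l]

section Expectation

variable {Ω : Type*} [MeasurableSpace Ω] {μ : Measure Ω}

lemma integral_debiasedCov_apply {d : ℕ} (p : Fin d → ℝ) {S : Ω → Matrix (Fin d) (Fin d) ℝ}
    (hS : ∀ k l, Integrable (fun a => S a k l) μ) (k l : Fin d) :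
    ∫ a, debiasedCov p (S a) k l ∂μ = debiasedCov p (Matrix.of fun k l => ∫ a, S a k l ∂μ) k l := by
  simp only [debiasedCov_apply, of_apply]
  rw [integral_add _ ((hS k l).const_mul _ |>.mul_const _)]
  · split_ifs
    · rw [integral_const_mul, integral_mul_const, integral_const_mul]
    · rw [integral_zero, integral_mul_const, integral_const_mul]
  · split_ifs
    · exact (hS k k).const_mul _
    · exact integrable_zero _ _ _

lemma integrable_empSecondMoment_apply {n d : ℕ} {Z : Fin n → Ω → Fin d → ℝ}
    (hZ : ∀ i k l, Integrable (fun a => Z i a k * Z i a l) μ) (k l : Fin d) :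
    Integrable (fun a => empSecondMoment (fun i => Z i a) k l) μ := by
  simp only [empSecondMoment, of_apply]
  exact (integrable_finsetSum _ fun i _ => hZ i k l).const_mul _

lemma integral_empSecondMoment {n d : ℕ} (hn : n ≠ 0) {Z : Fin n → Ω → Fin d → ℝ}
    {M : Matrix (Fin d) (Fin d) ℝ} (hZ : ∀ i k l, Integrable (fun a => Z i a k * Z i a l) μ)
    (hZM : ∀ i k l, ∫ a, Z i a k * Z i a l ∂μ = M k l) (k l : Fin d) :
    ∫ a, empSecondMoment (fun i => Z i a) k l ∂μ = M k l := by
  simp only [empSecondMoment, of_apply]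
  rw [integral_const_mul, integral_finsetSum _ fun i _ => hZ i k l]
  simp only [hZM, Finset.sum_const, Finset.card_univ, Fintype.card_fin, nsmul_eq_mul]
  field_simp

lemma integral_eq_of_ae_zero_or_one_s3 {f : Ω → ℝ} (hf : Measurable f)
    (h01 : ∀ᵐ a ∂μ, f a = 0 ∨ f a = 1) {q : ℝ} (hq : 0 ≤ q)
    (hf1 : μ {a | f a = 1} = ENNReal.ofReal q) :
    ∫ a, f a ∂μ = q := by
  have h_indicator : f =ᵐ[μ] Set.indicator {a | f a = 1} fun _ => (1 : ℝ) := by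
    filter_upwards [h01] with a ha
    rcases ha with h | h <;> simp [Set.indicator, h]
  have h_meas : MeasurableSet {a | f a = 1} := hf (measurableSet_singleton 1)
  rw [integral_congr_ae h_indicator, integral_indicator_const _ h_meas,
    measureReal_def, hf1, ENNReal.toReal_ofReal hq, smul_eq_mul, mul_one]

lemma integrable_mul_of_integrable_sum_sq {d : ℕ} {X : Ω → Fin d → ℝ} (hX : Measurable X)
    (hX2 : Integrable (fun a => ∑ m, X a m ^ 2) μ) (k l : Fin d) :
    Integrable (fun a => X a k * X a l) μ := by
  refine (hX2.const_mul 2).mono' (by fun_prop) (ae_of_all _ fun a => ?_)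
  have hk : X a k ^ 2 ≤ ∑ m, X a m ^ 2 :=
    Finset.single_le_sum (f := fun m => X a m ^ 2) (fun m _ => sq_nonneg _) (Finset.mem_univ k)
  have hl : X a l ^ 2 ≤ ∑ m, X a m ^ 2 :=
    Finset.single_le_sum (f := fun m => X a m ^ 2) (fun m _ => sq_nonneg _) (Finset.mem_univ l)
  rw [Real.norm_eq_abs, abs_le]
  constructor <;> nlinarith [sq_nonneg (X a k + X a l), sq_nonneg (X a k - X a l)]

section Mask

variable {d : ℕ} {W : Ω → Fin d → ℝ} (hW : Measurable W)
  (h01 : ∀ᵐ a ∂μ, ∀ k, W a k = 0 ∨ W a k = 1)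
include hW h01

lemma integral_mask_mul_mask {p : Fin d → ℝ} (hp : ∀ k, 0 ≤ p k)
    (hber : ∀ k, μ {a | W a k = 1} = ENNReal.ofReal (p k))
    (hind : Pairwise fun k l => IndepFun (fun a => W a k) (fun a => W a l) μ) (k l : Fin d) :
    ∫ a, W a k * W a l ∂μ = maskSecondMoment p k l := by
  have hmean : ∀ k, ∫ a, W a k ∂μ = p k := fun k =>
    integral_eq_of_ae_zero_or_one_s3 (by fun_prop) (h01.mono fun a ha => ha k) (hp k) (hber k)
  rcases eq_or_ne k l with rfl | hkl
  · have h_idem : (fun a => W a k * W a k) =ᵐ[μ] fun a => W a k := by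
      filter_upwards [h01] with a ha
      rcases ha k with h | h <;> simp [h]
    rw [integral_congr_ae h_idem, hmean, maskSecondMoment, of_apply, if_pos rfl]
  · rw [(hind hkl).integral_fun_mul_eq_mul_integral (by fun_prop) (by fun_prop), hmean, hmean,
      maskSecondMoment, of_apply, if_neg hkl]

lemma integrable_masked_mul {X : Ω → Fin d → ℝ} {k l : Fin d}
    (hXX : Integrable (fun a => X a k * X a l) μ) :
    Integrable (fun a => X a k * W a k * (X a l * W a l)) μ := by
  have h_bound : ∀ᵐ a ∂μ, ‖W a k * W a l‖ ≤ 1 := by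
    filter_upwards [h01] with a ha
    rcases ha k with h | h <;> rcases ha l with h' | h' <;> simp [h, h']
  refine (hXX.bdd_mul (by fun_prop) h_bound).congr (ae_of_all _ fun a => ?_)
  ring

end Mask

lemma integral_masked_mul {d : ℕ} {X W : Ω → Fin d → ℝ} (hX : Measurable X) (hW : Measurable W)
    (hWX : IndepFun W X μ) (k l : Fin d) :
    ∫ a, X a k * W a k * (X a l * W a l) ∂μ
      = (∫ a, W a k * W a l ∂μ) * ∫ a, X a k * X a l ∂μ := by
  have h_prod : IndepFun (fun a => W a k * W a l) (fun a => X a k * X a l) μ := by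
    exact hWX.comp (φ := fun w => w k * w l) (ψ := fun x => x k * x l) (by fun_prop) (by fun_prop)
  rw [← h_prod.integral_fun_mul_eq_mul_integral (by fun_prop) (by fun_prop)]
  congr 1 with a
  ring

end Expectation

theorem debiasedCov_unbiased_general
    {Ω : Type*} [MeasurableSpace Ω] (μ : Measure Ω)
    {d n : ℕ} (hn : 0 < n) (Xs Ws : Fin n → Ω → Fin d → ℝ)
    (p : Fin d → ℝ) (Sig : Matrix (Fin d) (Fin d) ℝ)
    (hp : ∀ i, p i ∈ Set.Ioc (0 : ℝ) 1)
    (hXmeas : ∀ i, Measurable (Xs i)) (hWmeas : ∀ i, Measurable (Ws i))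
    (hX2 : ∀ i, Integrable (fun a => ∑ k, (Xs i a k) ^ 2) μ)
    (hXcov : ∀ i k l, ∫ a, Xs i a k * Xs i a l ∂μ = Sig k l)
    -- the masks take values in `{0,1}` with `P(Wᵢₖ = 1) = pₖ`
    (hW01 : ∀ i, ∀ᵐ a ∂μ, ∀ k, Ws i a k = 0 ∨ Ws i a k = 1)
    (hWber : ∀ i k, μ {a | Ws i a k = 1} = ENNReal.ofReal (p k))
    -- all mask coordinates, across all samples, are mutually independent
    (hWiIndep : iIndepFun
      (fun ik : Fin n × Fin d => fun a => Ws ik.1 a ik.2) μ)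
    -- the family of masks is independent of the family of samples
    (hWX : IndepFun (fun a i => Ws i a) (fun a i => Xs i a) μ) :
    Matrix.of (fun k l =>
        ∫ a, debiasedCov p (empSecondMoment (fun i k => Xs i a k * Ws i a k)) k l ∂μ)
      = Sig := by
  have hXX i := integrable_mul_of_integrable_sum_sq (hXmeas i) (hX2 i)
  have hZ i k l := integrable_masked_mul (hWmeas i) (hW01 i) (hXX i k l)
  have hWW i := integral_mask_mul_mask (hWmeas i) (hW01 i) (fun k => (hp k).1.le) (hWber i)
    fun k l hkl => hWiIndep.indepFun (i := (i, k)) (j := (i, l)) (by simpa using hkl)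
  have hZM i k l : ∫ a, Xs i a k * Ws i a k * (Xs i a l * Ws i a l) ∂μ
      = (maskSecondMoment p ⊙ Sig) k l := by
    rw [integral_masked_mul (hXmeas i) (hWmeas i)
      (hWX.comp (measurable_pi_apply i) (measurable_pi_apply i)), hWW, hXcov, hadamard_apply]
  have hS : Matrix.of (fun k l => ∫ a, empSecondMoment (fun i k => Xs i a k * Ws i a k) k l ∂μ)
      = maskSecondMoment p ⊙ Sig := by
    ext k l
    exact integral_empSecondMoment (Z := fun i a k => Xs i a k * Ws i a k) hn.ne' hZ hZM k l
  calc _ = debiasedCov p (maskSecondMoment p ⊙ Sig) := by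
        ext k l
        rw [of_apply, integral_debiasedCov_apply p (integrable_empSecondMoment_apply hZ), hS]
    _ = Sig := debiasedCov_maskSecondMoment_hadamard (fun k => (hp k).1.ne') Sig

/-- **Unbiasedness of the debiased covariance estimator under MCAR zero imputation.**
Let `X₁, …, Xₙ` be i.i.d. copies of a centered random vector with `E‖X‖² < ∞` and covariance
`Σ`, and `W₁, …, Wₙ` i.i.d. MCAR masks with probability vector `p ∈ (0,1]^d`, independent of the
`Xᵢ`. With `Zᵢ := Xᵢ ⊙ Wᵢ` and `S := n⁻¹ ∑ᵢ Zᵢ Zᵢᵀ`, the estimator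
`Σ̂ := P⁻¹(I - P⁻¹) diag(S) + P⁻¹ S P⁻¹` is unbiased: `E[Σ̂] = Σ`. -/
theorem debiasedCov_unbiased
    {Ω : Type*} [MeasurableSpace Ω] (μ : Measure Ω) [IsProbabilityMeasure μ]
    {d n : ℕ} (hn : 0 < n) (Xs Ws : Fin n → Ω → Fin d → ℝ)
    (p : Fin d → ℝ) (Sig : Matrix (Fin d) (Fin d) ℝ)
    (hp : ∀ i, p i ∈ Set.Ioc (0 : ℝ) 1)
    (hXmeas : ∀ i, Measurable (Xs i)) (hWmeas : ∀ i, Measurable (Ws i))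
    (hX2 : ∀ i, Integrable (fun a => ∑ k, (Xs i a k) ^ 2) μ)
    -- the `Xᵢ` are identically distributed …
    (hXid : ∀ i j, Measure.map (Xs i) μ = Measure.map (Xs j) μ)
    -- … mutually independent …
    (hXindep : iIndepFun Xs μ)
    -- … centered, with covariance `Σ`
    (hXcentered : ∀ i k, ∫ a, Xs i a k ∂μ = 0)
    (hXcov : ∀ i k l, ∫ a, Xs i a k * Xs i a l ∂μ = Sig k l)
    -- the masks take values in `{0,1}` with `P(Wᵢₖ = 1) = pₖ`
    (hW01 : ∀ i, ∀ᵐ a ∂μ, ∀ k, Ws i a k = 0 ∨ Ws i a k = 1)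
    (hWber : ∀ i k, μ {a | Ws i a k = 1} = ENNReal.ofReal (p k))
    -- all mask coordinates, across all samples, are mutually independent
    (hWiIndep : iIndepFun
      (fun ik : Fin n × Fin d => fun a => Ws ik.1 a ik.2) μ)
    -- the family of masks is independent of the family of samples
    (hWX : IndepFun (fun a i => Ws i a) (fun a i => Xs i a) μ) :
    Matrix.of (fun k l =>
        ∫ a, debiasedCov p (empSecondMoment (fun i k => Xs i a k * Ws i a k)) k l ∂μ)
      = Sig :=
  debiasedCov_unbiased_general μ hn Xs Ws p Sig hp hXmeas hWmeas hX2 hXcov hW01 hWber hWiIndep hWX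
end

section
/- Let x₁, …, xₙ ∈ ℝ^d and y₁, …, y_m ∈ ℝ^d be fixed points, M a symmetric d×d real matrix, and let ω_{x,1}, …, ω_{x,n} be i.i.d. MCAR masks with probability vector p ∈ (0,1]^d and ω_{y,1}, …, ω_{y,m} be i.i.d. MCAR masks with probability vector q ∈ (0,1]^d, all masks mutually independent. Let C_{ij} := (x_i − y_j)ᵀ M (x_i − y_j), M̄ := M − P M Q, and G ∈ ℝ^{n×m} with G_{ij} := x_iᵀ M̄ y_j. Then a matrix Π̄ ∈ Π(n,m) minimizes the expected zero-imputed transport objective Π ↦ E[Σ_{i,j} Π_{ij} (x_i⊙ω_{x,i} − y_j⊙ω_{y,j})ᵀ M (x_i⊙ω_{x,i} − y_j⊙ω_{y,j})] over the transport polytope Π(n,m) if and only if Π̄ minimizes Π ↦ Tr[Πᵀ (C + 2G)] over Π(n,m). That is, naive zero imputation implicitly replaces the cost matrix C by the regularized cost matrix C + 2G. -/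
/-!
For symmetric `M`, `(u - v)ᵀM(u - v) = uᵀMu + vᵀMv - 2 uᵀMv`. For `u = xᵢ ⊙ ω` and `v = yⱼ ⊙ ω'`
independent, the cross term has expectation `(P xᵢ)ᵀ M (Q yⱼ) = xᵢᵀ P M Q yⱼ`, while
`C + 2G = xᵢᵀMxᵢ + yⱼᵀMyⱼ - 2 xᵢᵀ P M Q yⱼ`. So the expected cost matrix is `C + 2G` plus a term
`aᵢ + bⱼ`, and every plan in `Π(n,m)` pays the same `∑ aᵢ / n + ∑ bⱼ / m` for it: on the transport
polytope the two objectives differ by a constant.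
-/

open MeasureTheory ProbabilityTheory Matrix

/-- The quadratic form `v ↦ vᵀ M v`. -/
def quadForm {d : ℕ} (M : Matrix (Fin d) (Fin d) ℝ) (v : Fin d → ℝ) : ℝ :=
  v ⬝ᵥ (M *ᵥ v)

/-- Membership in the transport polytope `Π(n,m)`: nonnegative entries, rows summing to `1/n`
and columns summing to `1/m`. -/
def IsTransportPlan {n m : ℕ} (Pl : Matrix (Fin n) (Fin m) ℝ) : Prop :=
  (∀ i j, 0 ≤ Pl i j) ∧ (∀ i, ∑ j, Pl i j = 1 / n) ∧ (∀ j, ∑ i, Pl i j = 1 / m)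


theorem quadForm_sub {d : ℕ} {M : Matrix (Fin d) (Fin d) ℝ} (hM : M.IsSymm) (u v : Fin d → ℝ) :
    quadForm M (u - v) = quadForm M u + quadForm M v - 2 * (u ⬝ᵥ M *ᵥ v) := by
  have hsymm : v ⬝ᵥ M *ᵥ u = u ⬝ᵥ M *ᵥ v := by
    rw [dotProduct_mulVec, ← mulVec_transpose, hM.eq, dotProduct_comm]
  simp only [quadForm, mulVec_sub, dotProduct_sub, sub_dotProduct, hsymm]
  ring

theorem diagonal_mulVec_dotProduct_mulVec_diagonal_mulVec {d : ℕ} (M : Matrix (Fin d) (Fin d) ℝ)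
    (p q x y : Fin d → ℝ) :
    (diagonal p *ᵥ x) ⬝ᵥ M *ᵥ (diagonal q *ᵥ y) = x ⬝ᵥ (diagonal p * M * diagonal q) *ᵥ y := by
  rw [← mulVec_mulVec, ← mulVec_mulVec, dotProduct_mulVec x]
  congr 1
  ext k
  rw [vecMul_diagonal, mulVec_diagonal, mul_comm]

theorem IsTransportPlan.sum_sum_mul_add {n m : ℕ} {Pl : Matrix (Fin n) (Fin m) ℝ}
    (hPl : IsTransportPlan Pl) (K : Matrix (Fin n) (Fin m) ℝ) (α : Fin n → ℝ) (β : Fin m → ℝ) :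
    ∑ i, ∑ j, Pl i j * (K i j + (α i + β j))
      = trace (Plᵀ * K) + (∑ i, α i / n + ∑ j, β j / m) := by
  have htrace : trace (Plᵀ * K) = ∑ i, ∑ j, Pl i j * K i j := by
    simp only [trace, diag, mul_apply, transpose_apply]
    exact Finset.sum_comm
  have hα : ∑ i, ∑ j, Pl i j * α i = ∑ i, α i / n := by
    simp only [← Finset.sum_mul, hPl.2.1]
    simp [div_eq_inv_mul]
  have hβ : ∑ i, ∑ j, Pl i j * β j = ∑ j, β j / m := by
    rw [Finset.sum_comm]
    simp only [← Finset.sum_mul, hPl.2.2]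
    simp [div_eq_inv_mul]
  simp only [mul_add, Finset.sum_add_distrib, htrace, hα, hβ]

section RandomVectors

variable {Ω : Type*} [MeasurableSpace Ω] {μ : Measure Ω} {d : ℕ}

theorem memLp_top_dotProduct_mulVec (M : Matrix (Fin d) (Fin d) ℝ) {U V : Ω → Fin d → ℝ}
    (hU : ∀ k, MemLp (fun a => U a k) ⊤ μ) (hV : ∀ k, MemLp (fun a => V a k) ⊤ μ) :
    MemLp (fun a => U a ⬝ᵥ M *ᵥ V a) ⊤ μ := by
  simp only [dotProduct, mulVec]
  exact memLp_finsetSum _ fun k _ =>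
    (memLp_finsetSum _ fun l _ => (hV l).const_mul (M k l)).mul' (r := ⊤) (hU k)

theorem integrable_quadForm [IsFiniteMeasure μ] (M : Matrix (Fin d) (Fin d) ℝ)
    {U : Ω → Fin d → ℝ} (hU : ∀ k, MemLp (fun a => U a k) ⊤ μ) :
    Integrable (fun a => quadForm M (U a)) μ :=
  (memLp_top_dotProduct_mulVec M hU hU).integrable le_top

theorem integral_sum_sum_const_mul {ι κ : Type*} [Fintype ι] [Fintype κ] (c : ι → κ → ℝ)
    {f : ι → κ → Ω → ℝ} (hf : ∀ i j, Integrable (f i j) μ) :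
    ∫ a, ∑ i, ∑ j, c i j * f i j a ∂μ = ∑ i, ∑ j, c i j * ∫ a, f i j a ∂μ := by
  rw [integral_finsetSum _ fun i _ => integrable_finsetSum _ fun j _ => (hf i j).const_mul _]
  refine Finset.sum_congr rfl fun i _ => ?_
  rw [integral_finsetSum _ fun j _ => (hf i j).const_mul _]
  simp_rw [integral_const_mul]

theorem integral_dotProduct_mulVec_of_indepFun [IsFiniteMeasure μ]
    (M : Matrix (Fin d) (Fin d) ℝ) {U V : Ω → Fin d → ℝ}
    (hU : ∀ k, MemLp (fun a => U a k) ⊤ μ) (hV : ∀ k, MemLp (fun a => V a k) ⊤ μ)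
    (hind : ∀ k l, IndepFun (fun a => U a k) (fun a => V a l) μ) :
    ∫ a, U a ⬝ᵥ M *ᵥ V a ∂μ = (fun k => ∫ a, U a k ∂μ) ⬝ᵥ M *ᵥ (fun l => ∫ a, V a l ∂μ) := by
  have hterm : ∀ k l, Integrable (fun a => U a k * (M k l * V a l)) μ := fun k l =>
    (((hV l).const_mul (M k l)).mul (hU k)).integrable le_top
  simp only [dotProduct, mulVec, Finset.mul_sum]
  rw [integral_finsetSum _ fun k _ => integrable_finsetSum _ fun l _ => hterm k l]
  refine Finset.sum_congr rfl fun k _ => ?_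
  rw [integral_finsetSum _ fun l _ => hterm k l]
  refine Finset.sum_congr rfl fun l _ => ?_
  simp_rw [mul_left_comm (U _ k), integral_const_mul,
    (hind k l).integral_fun_mul_eq_mul_integral (hU k).1 (hV l).1]
  ring

theorem integral_quadForm_sub_of_indepFun [IsFiniteMeasure μ] {M : Matrix (Fin d) (Fin d) ℝ}
    (hM : M.IsSymm) {U V : Ω → Fin d → ℝ}
    (hU : ∀ k, MemLp (fun a => U a k) ⊤ μ) (hV : ∀ k, MemLp (fun a => V a k) ⊤ μ)
    (hind : ∀ k l, IndepFun (fun a => U a k) (fun a => V a l) μ) :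
    ∫ a, quadForm M (U a - V a) ∂μ = ∫ a, quadForm M (U a) ∂μ + ∫ a, quadForm M (V a) ∂μ
      - 2 * ((fun k => ∫ a, U a k ∂μ) ⬝ᵥ M *ᵥ (fun l => ∫ a, V a l ∂μ)) := by
  have hUU := integrable_quadForm M hU
  have hVV := integrable_quadForm M hV
  have hUV := ((memLp_top_dotProduct_mulVec M hU hV).integrable le_top).const_mul 2
  simp_rw [quadForm_sub hM]
  rw [integral_sub (f := fun a => quadForm M (U a) + quadForm M (V a)) (hUU.add hVV) hUV,
    integral_add hUU hVV, integral_const_mul,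
    integral_dotProduct_mulVec_of_indepFun M hU hV hind]

theorem memLp_top_of_ae_zero_or_one {X : Ω → ℝ} (hX : AEStronglyMeasurable X μ)
    (h01 : ∀ᵐ a ∂μ, X a = 0 ∨ X a = 1) : MemLp X ⊤ μ :=
  memLp_top_of_bound hX 1 (h01.mono fun a h => by rcases h with h | h <;> simp [h])

theorem integral_eq_of_ae_zero_or_one_s6 {X : Ω → ℝ} (hX : Measurable X)
    (h01 : ∀ᵐ a ∂μ, X a = 0 ∨ X a = 1) {r : ℝ} (hr : 0 ≤ r)
    (hX1 : μ {a | X a = 1} = ENNReal.ofReal r) : ∫ a, X a ∂μ = r := by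
  have hX_eq : X =ᵐ[μ] {a | X a = 1}.indicator 1 := h01.mono fun a h => by
    rcases h with h | h <;> simp [Set.indicator, h]
  have hmeas : MeasurableSet {a | X a = 1} := hX (measurableSet_singleton 1)
  rw [integral_congr_ae hX_eq, integral_indicator_one hmeas, measureReal_def, hX1,
    ENNReal.toReal_ofReal hr]

theorem memLp_top_mul_apply {W : Ω → Fin d → ℝ} (hW : Measurable W)
    (hW01 : ∀ᵐ a ∂μ, ∀ k, W a k = 0 ∨ W a k = 1) (x : Fin d → ℝ) (k : Fin d) :
    MemLp (fun a => (x * W a) k) ⊤ μ :=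
  (memLp_top_of_ae_zero_or_one (measurable_pi_iff.mp hW k).aestronglyMeasurable
    (hW01.mono fun _ h => h k)).const_mul (x k)

theorem integral_quadForm_mul_sub_mul [IsFiniteMeasure μ] {M : Matrix (Fin d) (Fin d) ℝ}
    (hM : M.IsSymm) {W W' : Ω → Fin d → ℝ} (hW : Measurable W) (hW' : Measurable W')
    (hW01 : ∀ᵐ a ∂μ, ∀ k, W a k = 0 ∨ W a k = 1) (hW'01 : ∀ᵐ a ∂μ, ∀ k, W' a k = 0 ∨ W' a k = 1)
    {p q : Fin d → ℝ} (hp : ∀ k, 0 ≤ p k) (hq : ∀ k, 0 ≤ q k)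
    (hWp : ∀ k, μ {a | W a k = 1} = ENNReal.ofReal (p k))
    (hW'q : ∀ k, μ {a | W' a k = 1} = ENNReal.ofReal (q k))
    (hind : ∀ k l, IndepFun (fun a => W a k) (fun a => W' a l) μ) (x y : Fin d → ℝ) :
    ∫ a, quadForm M (x * W a - y * W' a) ∂μ
      = ∫ a, quadForm M (x * W a) ∂μ + ∫ a, quadForm M (y * W' a) ∂μ
        - 2 * (x ⬝ᵥ (diagonal p * M * diagonal q) *ᵥ y) := by
  have hmean : ∀ {V : Ω → Fin d → ℝ} {r : Fin d → ℝ}, Measurable V →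
      (∀ᵐ a ∂μ, ∀ k, V a k = 0 ∨ V a k = 1) → (∀ k, 0 ≤ r k) →
      (∀ k, μ {a | V a k = 1} = ENNReal.ofReal (r k)) →
      ∀ z : Fin d → ℝ, (fun k => ∫ a, (z * V a) k ∂μ) = diagonal r *ᵥ z :=
    fun hV hV01 hr hVr z => by
      ext k
      rw [mulVec_diagonal, mul_comm, ← integral_eq_of_ae_zero_or_one_s6 (measurable_pi_iff.mp hV k)
        (hV01.mono fun _ h => h k) (hr k) (hVr k), ← integral_const_mul]
      rfl
  rw [integral_quadForm_sub_of_indepFun hM (memLp_top_mul_apply hW hW01 x)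
    (memLp_top_mul_apply hW' hW'01 y)
    (fun k l => (hind k l).comp (measurable_const_mul (x k)) (measurable_const_mul (y l))),
    hmean hW hW01 hp hWp, hmean hW' hW'01 hq hW'q,
    diagonal_mulVec_dotProduct_mulVec_diagonal_mulVec]

end RandomVectors

/-- **Naive zero imputation implicitly regularizes the optimal transport cost.**
With `Cᵢⱼ = (xᵢ−yⱼ)ᵀM(xᵢ−yⱼ)`, `M̄ = M − P M Q` and `Gᵢⱼ = xᵢᵀ M̄ yⱼ`, a transport plan
`Π̄ ∈ Π(n,m)` minimizes the expected zero-imputed transport objective over the transport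
polytope if and only if it minimizes `Π ↦ Tr[Πᵀ (C + 2G)]` over the transport polytope. -/
theorem masked_transport_minimizer_iff
    {Ω : Type*} [MeasurableSpace Ω] (μ : Measure Ω) [IsProbabilityMeasure μ]
    {d n m : ℕ} (x : Fin n → Fin d → ℝ) (y : Fin m → Fin d → ℝ)
    (M : Matrix (Fin d) (Fin d) ℝ) (hM : M.IsSymm)
    (Wx : Fin n → Ω → Fin d → ℝ) (Wy : Fin m → Ω → Fin d → ℝ)
    (p q : Fin d → ℝ)
    (hp : ∀ i, p i ∈ Set.Ioc (0 : ℝ) 1) (hq : ∀ i, q i ∈ Set.Ioc (0 : ℝ) 1)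
    (hWxmeas : ∀ i, Measurable (Wx i)) (hWymeas : ∀ j, Measurable (Wy j))
    (hWx01 : ∀ i, ∀ᵐ a ∂μ, ∀ k, Wx i a k = 0 ∨ Wx i a k = 1)
    (hWy01 : ∀ j, ∀ᵐ a ∂μ, ∀ k, Wy j a k = 0 ∨ Wy j a k = 1)
    (hWxber : ∀ i k, μ {a | Wx i a k = 1} = ENNReal.ofReal (p k))
    (hWyber : ∀ j k, μ {a | Wy j a k = 1} = ENNReal.ofReal (q k))
    -- all coordinates of all masks are mutually independent
    (hiIndep : iIndepFun
      (fun sk : (Fin n ⊕ Fin m) × Fin d =>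
        fun a => Sum.elim (fun i => Wx i a) (fun j => Wy j a) sk.1 sk.2) μ)
    (C G : Matrix (Fin n) (Fin m) ℝ)
    (hC : ∀ i j, C i j = quadForm M (x i - y j))
    (hG : ∀ i j, G i j = x i ⬝ᵥ ((M - Matrix.diagonal p * M * Matrix.diagonal q) *ᵥ y j))
    (PlBar : Matrix (Fin n) (Fin m) ℝ) (hPlBar : IsTransportPlan PlBar) :
    (∀ Pl, IsTransportPlan Pl →
        (∫ a, ∑ i, ∑ j,
            PlBar i j * quadForm M (fun k => x i k * Wx i a k - y j k * Wy j a k) ∂μ)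
          ≤ ∫ a, ∑ i, ∑ j,
              Pl i j * quadForm M (fun k => x i k * Wx i a k - y j k * Wy j a k) ∂μ)
      ↔ (∀ Pl, IsTransportPlan Pl →
          Matrix.trace (PlBarᵀ * (C + (2 : ℝ) • G)) ≤ Matrix.trace (Plᵀ * (C + (2 : ℝ) • G))) := by
  have hintegrable : ∀ i j, Integrable
      (fun a => quadForm M (fun k => x i k * Wx i a k - y j k * Wy j a k)) μ := fun i j =>
    integrable_quadForm M fun k =>
      (memLp_top_mul_apply (hWxmeas i) (hWx01 i) (x i) k).sub
        (memLp_top_mul_apply (hWymeas j) (hWy01 j) (y j) k)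
  have hpair : ∀ i j, ∫ a, quadForm M (fun k => x i k * Wx i a k - y j k * Wy j a k) ∂μ
      = (C + (2 : ℝ) • G) i j + ((∫ a, quadForm M (x i * Wx i a) ∂μ - quadForm M (x i))
        + (∫ a, quadForm M (y j * Wy j a) ∂μ - quadForm M (y j))) := fun i j => by
    refine (integral_quadForm_mul_sub_mul hM (hWxmeas i) (hWymeas j) (hWx01 i) (hWy01 j)
      (fun k => (hp k).1.le) (fun k => (hq k).1.le) (hWxber i) (hWyber j)
      (fun k l => hiIndep.indepFun (i := (Sum.inl i, k)) (j := (Sum.inr j, l)) (by simp))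
      (x i) (y j)).trans ?_
    rw [Matrix.add_apply, Matrix.smul_apply, smul_eq_mul, hC, hG, quadForm_sub hM, sub_mulVec,
      dotProduct_sub]
    ring
  obtain ⟨c, hobj⟩ : ∃ c, ∀ Pl, IsTransportPlan Pl →
      ∫ a, ∑ i, ∑ j, Pl i j * quadForm M (fun k => x i k * Wx i a k - y j k * Wy j a k) ∂μ
        = trace (Plᵀ * (C + (2 : ℝ) • G)) + c := ⟨_, fun Pl hPl => by
    rw [integral_sum_sum_const_mul Pl hintegrable]
    simp_rw [hpair]
    exact hPl.sum_sum_mul_add _ _ _⟩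
  exact forall₂_congr fun Pl hPl => by
    rw [hobj PlBar hPlBar, hobj Pl hPl]
    exact add_le_add_iff_right c
end

section
/- Let X be a random vector in ℝ^d with E‖X‖² < ∞, mean m_x, and diagonal covariance Σ_x = diag(σ₁², …, σ_d²) with σ_i > 0 for every i. Let M = diag(w₁, …, w_d) with w_i ≥ 0, and let ω be an MCAR mask with probability vector p ∈ (0,1]^d, independent of X. Let μ be the law of X and μ^NA the law of the zero-imputed vector X ⊙ ω. Then for every probability measure γ on ℝ^d × ℝ^d whose first marginal is μ^NA and whose second marginal is μ, ∫ (x − y)ᵀ M (x − y) dγ(x,y) ≥ ‖(P − I_d) m_x‖_M² + Σ_{i=1}^d w_i [σ_i − √(p_i) · √(σ_i² + (1 − p_i)(m_x)_i²)]². In particular, the squared 2-Wasserstein distance with ground cost ‖x − y‖_M² between μ^NA and μ is bounded below by this quantity. -/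
open MeasureTheory ProbabilityTheory Matrix

/-!
The cost splits over coordinates. In one coordinate the coupling makes `(u, v) = (zᵢ, z'ᵢ)` a pair
of square-integrable variables distributed as `Xᵢωᵢ` and `Xᵢ`, and Cauchy–Schwarz for their
covariance gives
`E(u - v)² = (Eu - Ev)² + Var u - 2 cov(u, v) + Var v ≥ (Eu - Ev)² + (√Var u - √Var v)²`.
As `ωᵢ` is a Bernoulli(`pᵢ`) variable independent of `Xᵢ` with `ωᵢ² = ωᵢ`, we get
`E[Xᵢωᵢ] = pᵢmᵢ` and `Var[Xᵢωᵢ] = pᵢE[Xᵢ²] - pᵢ²mᵢ² = pᵢ(σᵢ² + (1 - pᵢ)mᵢ²)`.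
-/

section Variance

variable {Ω : Type*} [MeasurableSpace Ω] {μ : Measure Ω} {X Y : Ω → ℝ}

lemma sq_covariance_le_variance_mul_variance [IsFiniteMeasure μ] (hX : MemLp X 2 μ)
    (hY : MemLp Y 2 μ) : cov[X, Y; μ] ^ 2 ≤ Var[X; μ] * Var[Y; μ] := by
  have hquad : ∀ t : ℝ, 0 ≤ Var[Y; μ] * (t * t) + 2 * cov[X, Y; μ] * t + Var[X; μ] := by
    intro t
    have h := variance_nonneg (X + t • Y) μ
    rw [variance_add hX (hY.const_smul t), variance_smul, covariance_smul_right] at h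
    linarith
  have := discrim_le_zero hquad
  rw [discrim] at this
  linarith

lemma covariance_le_sqrt_variance_mul_sqrt_variance [IsFiniteMeasure μ] (hX : MemLp X 2 μ)
    (hY : MemLp Y 2 μ) : cov[X, Y; μ] ≤ √Var[X; μ] * √Var[Y; μ] := by
  rw [← Real.sqrt_mul (variance_nonneg X μ)]
  exact (le_abs_self _).trans (Real.abs_le_sqrt (sq_covariance_le_variance_mul_variance hX hY))

lemma sq_sqrt_variance_sub_le_variance_sub [IsFiniteMeasure μ] (hX : MemLp X 2 μ)
    (hY : MemLp Y 2 μ) : (√Var[X; μ] - √Var[Y; μ]) ^ 2 ≤ Var[X - Y; μ] := by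
  rw [variance_sub hX hY, sub_sq, Real.sq_sqrt (variance_nonneg X μ),
    Real.sq_sqrt (variance_nonneg Y μ)]
  linarith [covariance_le_sqrt_variance_mul_sqrt_variance hX hY]

lemma sq_integral_sub_add_sq_sqrt_variance_sub_le_integral_sq_sub [IsProbabilityMeasure μ]
    (hX : MemLp X 2 μ) (hY : MemLp Y 2 μ) :
    (μ[X] - μ[Y]) ^ 2 + (√Var[X; μ] - √Var[Y; μ]) ^ 2 ≤ ∫ ω, (X ω - Y ω) ^ 2 ∂μ := by
  have h := variance_eq_sub (hX.sub hY)
  rw [integral_sub' (hX.integrable one_le_two) (hY.integrable one_le_two)] at h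
  have := sq_sqrt_variance_sub_le_variance_sub hX hY
  simp only [Pi.pow_apply, Pi.sub_apply] at h
  linarith

end Variance

section BernoulliMask

variable {Ω : Type*} [MeasurableSpace Ω] {μ : Measure Ω} {X B : Ω → ℝ}

lemma integral_eq_measureReal_of_ae_zero_or_one (hB : Measurable B)
    (hB01 : ∀ᵐ ω ∂μ, B ω = 0 ∨ B ω = 1) : μ[B] = μ.real {ω | B ω = 1} := by
  have hs : MeasurableSet {ω | B ω = 1} := hB (measurableSet_singleton 1)
  rw [← integral_indicator_one hs]
  refine integral_congr_ae (hB01.mono fun ω h => ?_)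
  rcases h with h | h <;> simp [h, Set.indicator]

lemma MeasureTheory.MemLp.mul_of_ae_zero_or_one_s7 {q : ENNReal} (hX : MemLp X q μ)
    (hB : AEStronglyMeasurable B μ) (hB01 : ∀ᵐ ω ∂μ, B ω = 0 ∨ B ω = 1) :
    MemLp (fun ω => X ω * B ω) q μ :=
  hX.of_le (hX.aestronglyMeasurable.mul hB)
    (hB01.mono fun ω h => by rcases h with h | h <;> simp [h])

lemma ProbabilityTheory.IndepFun.variance_mul_of_ae_zero_or_one [IsProbabilityMeasure μ]
    (hXB : X ⟂ᵢ[μ] B) (hX : MemLp X 2 μ) (hB : AEStronglyMeasurable B μ)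
    (hB01 : ∀ᵐ ω ∂μ, B ω = 0 ∨ B ω = 1) :
    Var[fun ω => X ω * B ω; μ] = μ[B] * (Var[X; μ] + (1 - μ[B]) * μ[X] ^ 2) := by
  have hsq : (fun ω => (X ω * B ω) ^ 2) =ᵐ[μ] fun ω => X ω ^ 2 * B ω :=
    hB01.mono fun ω h => by rcases h with h | h <;> simp [h]
  have hX2B : (fun ω => X ω ^ 2) ⟂ᵢ[μ] B := hXB.comp (measurable_id.pow_const 2) measurable_id
  rw [variance_eq_sub (hX.mul_of_ae_zero_or_one_s7 hB hB01), variance_eq_sub hX]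
  simp only [Pi.pow_apply]
  rw [integral_congr_ae hsq,
    hX2B.integral_fun_mul_eq_mul_integral (hX.aestronglyMeasurable.pow 2) hB,
    hXB.integral_fun_mul_eq_mul_integral hX.aestronglyMeasurable hB]
  ring

end BernoulliMask

theorem masked_wasserstein_lower_bound_real {Ω Ω' : Type*} [MeasurableSpace Ω]
    [MeasurableSpace Ω'] {μ : Measure Ω} [IsProbabilityMeasure μ] {γ : Measure Ω'}
    [IsProbabilityMeasure γ] {Y B : Ω → ℝ} {U V : Ω' → ℝ} {p m σ : ℝ} (hY : MemLp Y 2 μ)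
    (hB : AEStronglyMeasurable B μ) (hB01 : ∀ᵐ ω ∂μ, B ω = 0 ∨ B ω = 1) (hYB : Y ⟂ᵢ[μ] B)
    (hp : μ[B] = p) (hm : μ[Y] = m) (hσ : Var[Y; μ] = σ ^ 2) (hσ0 : 0 ≤ σ)
    (hU : IdentDistrib U (fun ω => Y ω * B ω) γ μ) (hV : IdentDistrib V Y γ μ) :
    ((p - 1) * m) ^ 2 + (σ - √p * √(σ ^ 2 + (1 - p) * m ^ 2)) ^ 2
      ≤ ∫ z, (U z - V z) ^ 2 ∂γ := by
  have hp0 : 0 ≤ p :=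
    hp ▸ integral_nonneg_of_ae (hB01.mono fun ω h => by rcases h with h | h <;> simp [h])
  have hbound := sq_integral_sub_add_sq_sqrt_variance_sub_le_integral_sq_sub
    (hU.memLp_iff.2 (hY.mul_of_ae_zero_or_one_s7 hB hB01)) (hV.memLp_iff.2 hY)
  rwa [hU.integral_eq, hV.integral_eq, hU.variance_eq, hV.variance_eq,
    hYB.integral_fun_mul_eq_mul_integral hY.aestronglyMeasurable hB,
    hYB.variance_mul_of_ae_zero_or_one hY hB hB01, hp, hm, hσ, Real.sqrt_mul hp0,
    Real.sqrt_sq hσ0, sub_sq_comm _ σ, mul_comm m, ← sub_one_mul] at hbound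

lemma MeasureTheory.Integrable.memLp_two_apply_of_sum_sq {Ω ι : Type*} [MeasurableSpace Ω]
    [Fintype ι] {μ : Measure Ω} {X : Ω → ι → ℝ} (hX : AEMeasurable X μ)
    (h : Integrable (fun ω => ∑ i, X ω i ^ 2) μ) (i : ι) : MemLp (fun ω => X ω i) 2 μ := by
  refine (memLp_two_iff_integrable_sq (by fun_prop)).2 <| h.mono' (by fun_prop) (ae_of_all _ ?_)
  intro ω
  rw [Real.norm_of_nonneg (sq_nonneg _)]
  exact Finset.single_le_sum (fun j _ => sq_nonneg (X ω j)) (Finset.mem_univ i)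

lemma Matrix.dotProduct_diagonal_mulVec_self {n R : Type*} [Fintype n] [DecidableEq n]
    [CommSemiring R] (w v : n → R) : v ⬝ᵥ (diagonal w *ᵥ v) = ∑ i, w i * v i ^ 2 := by
  simp only [dotProduct, mulVec_diagonal]
  exact Finset.sum_congr rfl fun i _ => by ring

lemma MeasureTheory.ofReal_integral_le_lintegral_ofReal {α : Type*} [MeasurableSpace α]
    {μ : Measure α} {f : α → ℝ} (hf : AEStronglyMeasurable f μ) (hf0 : 0 ≤ᵐ[μ] f) :
    ENNReal.ofReal (∫ x, f x ∂μ) ≤ ∫⁻ x, ENNReal.ofReal (f x) ∂μ := by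
  rw [integral_eq_lintegral_of_nonneg_ae hf0 hf]
  exact ENNReal.ofReal_toReal_le

lemma ofReal_sum_mul_le_lintegral_ofReal_dotProduct_diagonal_mulVec {n : Type*} [Fintype n]
    [DecidableEq n] {γ : Measure ((n → ℝ) × (n → ℝ))} {w c : n → ℝ} (hw : ∀ i, 0 ≤ w i)
    (hc : ∀ i, c i ≤ ∫ z, (z.1 i - z.2 i) ^ 2 ∂γ) :
    ENNReal.ofReal (∑ i, w i * c i)
      ≤ ∫⁻ z, ENNReal.ofReal ((z.1 - z.2) ⬝ᵥ (diagonal w *ᵥ (z.1 - z.2))) ∂γ := by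
  have hterm (i : n) (z : (n → ℝ) × (n → ℝ)) : 0 ≤ w i * (z.1 i - z.2 i) ^ 2 :=
    mul_nonneg (hw i) (sq_nonneg _)
  calc ENNReal.ofReal (∑ i, w i * c i)
      ≤ ENNReal.ofReal (∑ i, ∫ z, w i * (z.1 i - z.2 i) ^ 2 ∂γ) := by
        gcongr with i
        rw [integral_const_mul]
        exact mul_le_mul_of_nonneg_left (hc i) (hw i)
    _ = ∑ i, ENNReal.ofReal (∫ z, w i * (z.1 i - z.2 i) ^ 2 ∂γ) :=
        ENNReal.ofReal_sum_of_nonneg fun i _ => integral_nonneg (hterm i)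
    _ ≤ ∑ i, ∫⁻ z, ENNReal.ofReal (w i * (z.1 i - z.2 i) ^ 2) ∂γ := by
        gcongr with i
        exact ofReal_integral_le_lintegral_ofReal (by fun_prop) (ae_of_all _ (hterm i))
    _ = ∫⁻ z, ENNReal.ofReal ((z.1 - z.2) ⬝ᵥ (diagonal w *ᵥ (z.1 - z.2))) ∂γ := by
        rw [← lintegral_finsetSum _ fun i _ => by fun_prop]
        refine lintegral_congr fun z => ?_
        exact (ENNReal.ofReal_sum_of_nonneg fun i _ => hterm i z).symm.trans
          (congrArg _ (dotProduct_diagonal_mulVec_self w _).symm)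

theorem masked_wasserstein_lower_bound_general
    {Ω : Type*} [MeasurableSpace Ω] (μP : Measure Ω) [IsProbabilityMeasure μP]
    {d : ℕ} (X W : Ω → Fin d → ℝ) (p m σ w : Fin d → ℝ)
    (hp : ∀ i, p i ∈ Set.Ioc (0 : ℝ) 1)
    (hσ : ∀ i, 0 < σ i) (hw : ∀ i, 0 ≤ w i)
    (hXmeas : Measurable X) (hWmeas : Measurable W)
    (hX2 : Integrable (fun a => ∑ i, (X a i) ^ 2) μP)
    (hmean : ∀ i, ∫ a, X a i ∂μP = m i)
    (hcov : ∀ i j, ∫ a, (X a i - m i) * (X a j - m j) ∂μP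
      = if i = j then (σ i) ^ 2 else 0)
    (hW01 : ∀ᵐ a ∂μP, ∀ i, W a i = 0 ∨ W a i = 1)
    (hWber : ∀ i, μP {a | W a i = 1} = ENNReal.ofReal (p i))
    (hIndep : IndepFun W X μP)
    (γ : Measure ((Fin d → ℝ) × (Fin d → ℝ))) [IsProbabilityMeasure γ]
    (hfst : γ.map Prod.fst = μP.map (fun a k => X a k * W a k))
    (hsnd : γ.map Prod.snd = μP.map X) :
    ENNReal.ofReal
        ((∑ i, w i * ((p i - 1) * m i) ^ 2)
          + ∑ i, w i * (σ i - Real.sqrt (p i)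
              * Real.sqrt ((σ i) ^ 2 + (1 - p i) * (m i) ^ 2)) ^ 2)
      ≤ ∫⁻ z, ENNReal.ofReal
          ((fun k => z.1 k - z.2 k) ⬝ᵥ (Matrix.diagonal w *ᵥ fun k => z.1 k - z.2 k)) ∂γ := by
  have hU : IdentDistrib Prod.fst (fun a k => X a k * W a k) γ μP :=
    ⟨measurable_fst.aemeasurable, by fun_prop, hfst⟩
  have hV : IdentDistrib Prod.snd X γ μP := ⟨measurable_snd.aemeasurable, by fun_prop, hsnd⟩
  have hcoord (i : Fin d) : ((p i - 1) * m i) ^ 2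
      + (σ i - √(p i) * √(σ i ^ 2 + (1 - p i) * m i ^ 2)) ^ 2 ≤ ∫ z, (z.1 i - z.2 i) ^ 2 ∂γ := by
    have hWi : Measurable fun a => W a i := by fun_prop
    have hW01i : ∀ᵐ a ∂μP, W a i = 0 ∨ W a i = 1 := hW01.mono fun a h => h i
    refine masked_wasserstein_lower_bound_real (Y := fun a => X a i) (B := fun a => W a i)
      (hX2.memLp_two_apply_of_sum_sq hXmeas.aemeasurable i) hWi.aestronglyMeasurable hW01i
      (hIndep.comp (measurable_pi_apply i) (measurable_pi_apply i)).symm ?_ (hmean i) ?_ (hσ i).le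
      (hU.comp (measurable_pi_apply i)) (hV.comp (measurable_pi_apply i))
    · rw [integral_eq_measureReal_of_ae_zero_or_one hWi hW01i, measureReal_def, hWber,
        ENNReal.toReal_ofReal (hp i).1.le]
    · rw [variance_eq_integral (by fun_prop), hmean i]
      simpa [sq] using hcov i i
  rw [← Finset.sum_add_distrib]
  simp only [← mul_add]
  exact ofReal_sum_mul_le_lintegral_ofReal_dotProduct_diagonal_mulVec hw hcoord

/-- **Lower bound on the transport cost between a distribution and its zero-imputed version.**
Let `X` be a random vector in `ℝ^d` with `E‖X‖² < ∞`, mean `m` and diagonal covariance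
`diag(σ₁²,…,σ_d²)` with `σᵢ > 0`, let `M = diag(w)` with `wᵢ ≥ 0`, and let `W` be an MCAR mask
with probability vector `p ∈ (0,1]^d`, independent of `X`. Then every coupling `γ` of the law of
the zero-imputed vector `X ⊙ W` (first marginal) and the law of `X` (second marginal) satisfies
`∫ (x−y)ᵀM(x−y) dγ ≥ ‖(P−I)m‖_M² + ∑ᵢ wᵢ (σᵢ − √pᵢ √(σᵢ² + (1−pᵢ) mᵢ²))²`. -/
theorem masked_wasserstein_lower_bound
    {Ω : Type*} [MeasurableSpace Ω] (μP : Measure Ω) [IsProbabilityMeasure μP]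
    {d : ℕ} (X W : Ω → Fin d → ℝ) (p m σ w : Fin d → ℝ)
    (hp : ∀ i, p i ∈ Set.Ioc (0 : ℝ) 1)
    (hσ : ∀ i, 0 < σ i) (hw : ∀ i, 0 ≤ w i)
    (hXmeas : Measurable X) (hWmeas : Measurable W)
    (hX2 : Integrable (fun a => ∑ i, (X a i) ^ 2) μP)
    (hmean : ∀ i, ∫ a, X a i ∂μP = m i)
    (hcov : ∀ i j, ∫ a, (X a i - m i) * (X a j - m j) ∂μP
      = if i = j then (σ i) ^ 2 else 0)
    (hW01 : ∀ᵐ a ∂μP, ∀ i, W a i = 0 ∨ W a i = 1)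
    (hWber : ∀ i, μP {a | W a i = 1} = ENNReal.ofReal (p i))
    (hWiIndep : iIndepFun (fun i a => W a i) μP)
    (hIndep : IndepFun W X μP)
    (γ : Measure ((Fin d → ℝ) × (Fin d → ℝ))) [IsProbabilityMeasure γ]
    (hfst : γ.map Prod.fst = μP.map (fun a k => X a k * W a k))
    (hsnd : γ.map Prod.snd = μP.map X) :
    ENNReal.ofReal
        ((∑ i, w i * ((p i - 1) * m i) ^ 2)
          + ∑ i, w i * (σ i - Real.sqrt (p i)
              * Real.sqrt ((σ i) ^ 2 + (1 - p i) * (m i) ^ 2)) ^ 2)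
      ≤ ∫⁻ z, ENNReal.ofReal
          ((fun k => z.1 k - z.2 k) ⬝ᵥ (Matrix.diagonal w *ᵥ fun k => z.1 k - z.2 k)) ∂γ :=
  masked_wasserstein_lower_bound_general μP X W p m σ w hp hσ hw hXmeas hWmeas hX2 hmean hcov hW01
    hWber hIndep γ hfst hsnd
end

section
/- Let p ∈ (0,1]^d, P = diag(p), let Σ be a d×d positive definite real matrix, and m ∈ ℝ^d. Then the matrix Σ^NA := P Σ P + P(I_d − P) diag(Σ) + P(I_d − P) diag(m) diag(m) is positive definite. -/
/-! `P Σ P` is a congruence of `Σ` by the invertible `P`, hence positive definite; the other two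
terms are diagonal with entries `pᵢ(1 - pᵢ)Σᵢᵢ ≥ 0` and `pᵢ(1 - pᵢ)mᵢ² ≥ 0`. -/

open Matrix

namespace Matrix

variable {n : Type*} [Fintype n] [DecidableEq n]

theorem PosDef.diagonal_mul_mul_diagonal {K : Type*} [Field K] [PartialOrder K] [StarRing K]
    [TrivialStar K] {A : Matrix n n K} (hA : A.PosDef) {d : n → K} (hd : ∀ i, d i ≠ 0) :
    (diagonal d * A * diagonal d).PosDef := by
  have hinj : Function.Injective (diagonal d).mulVec :=
    mulVec_injective_iff_isUnit.mpr <| isUnit_diagonal.mpr <|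
      Pi.isUnit_iff.mpr fun i => (hd i).isUnit
  simpa [diagonal_conjTranspose] using hA.conjTranspose_mul_mul_same hinj

theorem posSemidef_diagonal_mul_one_sub_diagonal_mul_diagonal {R : Type*} [CommRing R]
    [PartialOrder R] [IsOrderedRing R] [StarRing R] [StarOrderedRing R] {p q : n → R}
    (hp : ∀ i, p i ∈ Set.Icc 0 1) (hq : ∀ i, 0 ≤ q i) :
    (diagonal p * (1 - diagonal p) * diagonal q).PosSemidef := by
  rw [← diagonal_one, diagonal_sub, diagonal_mul_diagonal, diagonal_mul_diagonal,
    posSemidef_diagonal_iff]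
  exact fun i => mul_nonneg (mul_nonneg (hp i).1 (sub_nonneg.mpr (hp i).2)) (hq i)

end Matrix

/-- **Positive definiteness of the covariance of a zero-imputed vector.**
For `p ∈ (0,1]^d`, `P = diag(p)`, a positive definite `Σ` and `m ∈ ℝ^d`, the matrix
`Σ^NA := P Σ P + P(I−P) diag(Σ) + P(I−P) diag(m) diag(m)` is positive definite. -/
theorem maskedCov_posDef
    {d : ℕ} (p m : Fin d → ℝ) (Sig : Matrix (Fin d) (Fin d) ℝ)
    (hp : ∀ i, p i ∈ Set.Ioc (0 : ℝ) 1) (hSig : Sig.PosDef) :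
    (Matrix.diagonal p * Sig * Matrix.diagonal p
      + Matrix.diagonal p * (1 - Matrix.diagonal p) * Matrix.diagonal (fun i => Sig i i)
      + Matrix.diagonal p * (1 - Matrix.diagonal p)
          * (Matrix.diagonal m * Matrix.diagonal m)).PosDef := by
  have hp' : ∀ i, p i ∈ Set.Icc 0 1 := fun i => Set.Ioc_subset_Icc_self (hp i)
  have hPSigP := hSig.diagonal_mul_mul_diagonal fun i => (hp i).1.ne'
  have hdiagSig := posSemidef_diagonal_mul_one_sub_diagonal_mul_diagonal hp'
    fun i => (hSig.diag_pos (i := i)).le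
  have hdiagMean := posSemidef_diagonal_mul_one_sub_diagonal_mul_diagonal hp'
    fun i => mul_self_nonneg (m i)
  rw [diagonal_mul_diagonal]
  exact (hPSigP.add_posSemidef hdiagSig).add_posSemidef hdiagMean
end

section
/- Let M be a d×d symmetric positive semidefinite real matrix with positive semidefinite square root M^{1/2}, and let x₁, …, xₙ, x̂₁, …, x̂ₙ ∈ ℝ^d and y₁, …, y_m, ŷ₁, …, ŷ_m ∈ ℝ^d. Define the cost matrices C, Ĉ ∈ ℝ^{n×m} by C_{ij} := ‖M^{1/2}(x_i − y_j)‖₂ and Ĉ_{ij} := ‖M^{1/2}(x̂_i − ŷ_j)‖₂. Then (nm)^{-1/2} ‖C − Ĉ‖_F ≤ √(2/n) · (Σ_{i=1}^n ‖M^{1/2}(x_i − x̂_i)‖₂²)^{1/2} + √(2/m) · (Σ_{j=1}^m ‖M^{1/2}(y_j − ŷ_j)‖₂²)^{1/2}. -/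
open Matrix

/-- The Euclidean norm of a vector in `ℝ^d`. -/
noncomputable def euclNorm {d : ℕ} (v : Fin d → ℝ) : ℝ :=
  Real.sqrt (∑ k, (v k) ^ 2)

lemma euclNorm_eq_norm {d : ℕ} (v : Fin d → ℝ) :
    euclNorm v = ‖(WithLp.equiv 2 (Fin d → ℝ)).symm v‖ := by
  rw [EuclideanSpace.norm_eq]
  simp [euclNorm, sq_abs]

lemma euclNorm_nonneg {d : ℕ} (v : Fin d → ℝ) : 0 ≤ euclNorm v := Real.sqrt_nonneg _

lemma abs_euclNorm_sub {d : ℕ} (u v : Fin d → ℝ) :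
    |euclNorm u - euclNorm v| ≤ euclNorm (u - v) := by
  simp only [euclNorm_eq_norm]
  have : (WithLp.equiv 2 (Fin d → ℝ)).symm (u - v)
      = (WithLp.equiv 2 (Fin d → ℝ)).symm u - (WithLp.equiv 2 (Fin d → ℝ)).symm v := rfl
  rw [this]
  exact abs_norm_sub_norm_le _ _

lemma euclNorm_sub_le {d : ℕ} (u v : Fin d → ℝ) :
    euclNorm (u - v) ≤ euclNorm u + euclNorm v := by
  simp only [euclNorm_eq_norm]
  have : (WithLp.equiv 2 (Fin d → ℝ)).symm (u - v)
      = (WithLp.equiv 2 (Fin d → ℝ)).symm u - (WithLp.equiv 2 (Fin d → ℝ)).symm v := rfl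
  rw [this]
  exact norm_sub_le _ _

lemma sqrt_add_le' (s t : ℝ) (hs : 0 ≤ s) (ht : 0 ≤ t) :
    Real.sqrt (s + t) ≤ Real.sqrt s + Real.sqrt t := by
  have h : s + t ≤ (Real.sqrt s + Real.sqrt t) ^ 2 := by
    nlinarith [Real.sq_sqrt hs, Real.sq_sqrt ht, Real.sqrt_nonneg s, Real.sqrt_nonneg t]
  have := Real.sqrt_le_sqrt h
  rwa [Real.sqrt_sq (by positivity)] at this

/-- **Sensitivity of the Mahalanobis cost matrix to perturbations of the point clouds.**
Let `M` be symmetric positive semidefinite with positive semidefinite square root `R`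
(`R * R = M`), and let `x, x̂ : Fin n → ℝ^d`, `y, ŷ : Fin m → ℝ^d`. With cost matrices
`C i j = ‖R(xᵢ − yⱼ)‖₂` and `Ĉ i j = ‖R(x̂ᵢ − ŷⱼ)‖₂`,
`(nm)^{-1/2} ‖C − Ĉ‖_F ≤ √(2/n) (∑ᵢ ‖R(xᵢ−x̂ᵢ)‖₂²)^{1/2} + √(2/m) (∑ⱼ ‖R(yⱼ−ŷⱼ)‖₂²)^{1/2}`. -/
theorem cost_matrix_sensitivity
    {d n m : ℕ} (M R : Matrix (Fin d) (Fin d) ℝ)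
    (hM : M.PosSemidef) (hR : R.PosSemidef) (hRR : R * R = M)
    (x xh : Fin n → Fin d → ℝ) (y yh : Fin m → Fin d → ℝ)
    (C Ch : Matrix (Fin n) (Fin m) ℝ)
    (hC : ∀ i j, C i j = euclNorm (R *ᵥ (x i - y j)))
    (hCh : ∀ i j, Ch i j = euclNorm (R *ᵥ (xh i - yh j))) :
    (Real.sqrt ((n : ℝ) * m))⁻¹ * Real.sqrt (∑ i, ∑ j, (C i j - Ch i j) ^ 2)
      ≤ Real.sqrt (2 / n) * Real.sqrt (∑ i, (euclNorm (R *ᵥ (x i - xh i))) ^ 2)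
        + Real.sqrt (2 / m) * Real.sqrt (∑ j, (euclNorm (R *ᵥ (y j - yh j))) ^ 2) := by
  set a : Fin n → ℝ := fun i => euclNorm (R *ᵥ (x i - xh i)) with ha
  set b : Fin m → ℝ := fun j => euclNorm (R *ᵥ (y j - yh j)) with hb
  set A : ℝ := ∑ i, a i ^ 2 with hA
  set B : ℝ := ∑ j, b j ^ 2 with hB
  have hA0 : 0 ≤ A := Finset.sum_nonneg fun i _ => sq_nonneg _
  have hB0 : 0 ≤ B := Finset.sum_nonneg fun j _ => sq_nonneg _
  have haval := ha; have hbval := hb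
  have rhs_nonneg : 0 ≤ Real.sqrt (2 / (n:ℝ)) * Real.sqrt A + Real.sqrt (2 / (m:ℝ)) * Real.sqrt B := by
    positivity
  rcases Nat.eq_zero_or_pos n with hn | hn
  · subst hn; simpa using rhs_nonneg
  rcases Nat.eq_zero_or_pos m with hm | hm
  · subst hm; simpa using rhs_nonneg
  have hn' : (0:ℝ) < n := by exact_mod_cast hn
  have hm' : (0:ℝ) < m := by exact_mod_cast hm
  -- pointwise bound
  have key : ∀ i j, (C i j - Ch i j) ^ 2 ≤ 2 * a i ^ 2 + 2 * b j ^ 2 := by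
    intro i j
    have h1 : |C i j - Ch i j| ≤ a i + b j := by
      rw [hC, hCh]
      have hvec : R *ᵥ (x i - y j) - R *ᵥ (xh i - yh j)
          = R *ᵥ (x i - xh i) - R *ᵥ (y j - yh j) := by
        simp only [← Matrix.mulVec_sub]
        congr 1
        abel
      calc |euclNorm (R *ᵥ (x i - y j)) - euclNorm (R *ᵥ (xh i - yh j))|
          ≤ euclNorm (R *ᵥ (x i - y j) - R *ᵥ (xh i - yh j)) := abs_euclNorm_sub _ _
        _ = euclNorm (R *ᵥ (x i - xh i) - R *ᵥ (y j - yh j)) := by rw [hvec]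
        _ ≤ a i + b j := euclNorm_sub_le _ _
    have h2 : (C i j - Ch i j) ^ 2 ≤ (a i + b j) ^ 2 := by
      rw [← sq_abs]
      exact pow_le_pow_left₀ (abs_nonneg _) h1 2
    nlinarith [sq_nonneg (a i - b j)]
  have Ssum : (∑ i, ∑ j, (C i j - Ch i j) ^ 2) ≤ 2 * m * A + 2 * n * B := by
    calc (∑ i, ∑ j, (C i j - Ch i j) ^ 2)
        ≤ ∑ i, ∑ j, (2 * a i ^ 2 + 2 * b j ^ 2) := by
          apply Finset.sum_le_sum; intro i _
          apply Finset.sum_le_sum; intro j _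
          exact key i j
      _ = 2 * m * A + 2 * n * B := by
          simp [Finset.sum_add_distrib, Finset.mul_sum, hA, hB]
          congr 1 <;> exact Finset.sum_congr rfl fun _ _ => by ring
  set S : ℝ := ∑ i, ∑ j, (C i j - Ch i j) ^ 2 with hS
  have hS0 : 0 ≤ S := Finset.sum_nonneg fun i _ => Finset.sum_nonneg fun j _ => sq_nonneg _
  clear_value S
  have step1 : (Real.sqrt ((n : ℝ) * m))⁻¹ * Real.sqrt S = Real.sqrt (S / ((n:ℝ) * m)) := by
    rw [Real.sqrt_div hS0]
    ring
  have step2 : S / ((n:ℝ) * m) ≤ 2 / n * A + 2 / m * B := by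
    rw [div_le_iff₀ (by positivity)]
    calc S ≤ 2 * m * A + 2 * n * B := Ssum
      _ = (2 / n * A + 2 / m * B) * (n * m) := by field_simp
  calc (Real.sqrt ((n : ℝ) * m))⁻¹ * Real.sqrt S
      = Real.sqrt (S / ((n:ℝ) * m)) := step1
    _ ≤ Real.sqrt (2 / n * A + 2 / m * B) := Real.sqrt_le_sqrt step2
    _ ≤ Real.sqrt (2 / n * A) + Real.sqrt (2 / m * B) :=
        sqrt_add_le' _ _ (mul_nonneg (by positivity) hA0) (mul_nonneg (by positivity) hB0)
    _ = Real.sqrt (2 / n) * Real.sqrt A + Real.sqrt (2 / m) * Real.sqrt B := by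
        rw [Real.sqrt_mul (by positivity), Real.sqrt_mul (by positivity)]
end
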